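/- Let f be analytic on the open unit disk D with f(0)=0, f'(0)=1, f(z) ≠ 0 for z ∈ D\{0}, and suppose h(z) = (1+z)²f(z)/z (extended by h(0)=1) satisfies Re h > 0 on D and h'(0) = 2(1+2b) with b real, b₁ := |1+2b| ≤ 1. Then for all z with |z| = r < 1, |z f'(z)/f(z) - (1+r²)/(1-r²)| ≤ 2((1+b₁)r³ + 2(1+b₁)r² + (1+b₁)r)/((1-r²)(r² + 2b₁r + 1)). -/

import Mathlib

/-!
With `ψ = (h - 1)/(h + 1)`, a self-map of the disk with `ψ 0 = 0` and `ψ'(0) = h'(0)/2`, one has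
`z h'/h = 2zψ'/(1 - ψ²)` and `z f'/f = z h'/h + (1 - z)/(1 + z)`. For `|z| = r` the second term
lies on the circle with centre `(1 + r²)/(1 - r²)` and radius `2r/(1 - r²)`. The first is bounded
(McCarty) through `φ = ψ(z)/z`, which maps the disk into the closed disk with `φ 0 = ψ'(0)`:
Schwarz–Pick gives `|φ z| ≤ (β + r)/(1 + βr)` and `|φ' z| ≤ (1 - |φ z|²)/(1 - r²)`, and the
resulting bound on `|zψ'|/|1 - ψ²|` is increasing in `|φ z|`.
-/

open Metric Set Complex ComplexConjugate Filter Topology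

noncomputable def blaschkeFactor (a w : ℂ) : ℂ := (w - a) / (1 - conj a * w)

lemma one_sub_conj_mul_ne_zero {a w : ℂ} (ha : ‖a‖ < 1) (hw : ‖w‖ ≤ 1) :
    1 - conj a * w ≠ 0 := by
  refine sub_ne_zero.mpr (ne_of_apply_ne norm (ne_of_gt ?_))
  rw [norm_mul, RCLike.norm_conj, norm_one]
  nlinarith [norm_nonneg a, norm_nonneg w, mul_le_mul_of_nonneg_left hw (norm_nonneg a)]

lemma sq_norm_one_sub_conj_mul_sub_sq_norm_sub (a w : ℂ) :
    ‖1 - conj a * w‖ ^ 2 - ‖w - a‖ ^ 2 = (1 - ‖a‖ ^ 2) * (1 - ‖w‖ ^ 2) := by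
  simp only [Complex.sq_norm, normSq_apply, sub_re, sub_im, mul_re, mul_im, conj_re, conj_im,
    one_re, one_im]
  ring

lemma norm_blaschkeFactor_lt_one {a w : ℂ} (ha : ‖a‖ < 1) (hw : ‖w‖ < 1) :
    ‖blaschkeFactor a w‖ < 1 := by
  have hden := one_sub_conj_mul_ne_zero ha hw.le
  rw [blaschkeFactor, norm_div, div_lt_one (norm_pos_iff.mpr hden)]
  refine lt_of_pow_lt_pow_left₀ 2 (norm_nonneg _) ?_
  have := sq_norm_one_sub_conj_mul_sub_sq_norm_sub a w
  have ha2 : ‖a‖ ^ 2 < 1 := by nlinarith [norm_nonneg a]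
  have hw2 : ‖w‖ ^ 2 < 1 := by nlinarith [norm_nonneg w]
  nlinarith [mul_pos (sub_pos.2 ha2) (sub_pos.2 hw2)]

lemma mapsTo_blaschkeFactor {a : ℂ} (ha : ‖a‖ < 1) :
    MapsTo (blaschkeFactor a) (ball 0 1) (ball 0 1) := fun w hw ↦ by
  rw [mem_ball_zero_iff] at hw ⊢
  exact norm_blaschkeFactor_lt_one ha hw

lemma hasDerivAt_blaschkeFactor {a w : ℂ} (ha : ‖a‖ < 1) (hw : ‖w‖ < 1) :
    HasDerivAt (blaschkeFactor a) ((1 - conj a * a) / (1 - conj a * w) ^ 2) w := by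
  have hden := one_sub_conj_mul_ne_zero ha hw.le
  have := ((hasDerivAt_id' w).sub_const a).div
    (((hasDerivAt_id' w).const_mul (conj a)).const_sub 1) hden
  exact this.congr_deriv (by ring)

lemma differentiableOn_blaschkeFactor {a : ℂ} (ha : ‖a‖ < 1) :
    DifferentiableOn ℂ (blaschkeFactor a) (ball 0 1) := fun _ hw ↦
  (hasDerivAt_blaschkeFactor ha (mem_ball_zero_iff.mp hw)).differentiableAt.differentiableWithinAt

@[simp] lemma blaschkeFactor_self (a : ℂ) : blaschkeFactor a a = 0 := by
  simp [blaschkeFactor]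

@[simp] lemma blaschkeFactor_neg_zero (a : ℂ) : blaschkeFactor (-a) 0 = a := by
  simp [blaschkeFactor]

lemma norm_mul_one_add_le_of_norm_sub_le {p a : ℂ} {s : ℝ} (ha : ‖a‖ ≤ 1) (hp : ‖p‖ ≤ 1)
    (hs0 : 0 ≤ s) (hs1 : s ≤ 1) (h : ‖p - a‖ ≤ s * ‖1 - conj a * p‖) :
    ‖p‖ * (1 + ‖a‖ * s) ≤ ‖a‖ + s := by
  have hden : 1 - ‖a‖ * ‖p‖ ≤ ‖1 - conj a * p‖ := by
    simpa [norm_mul] using norm_sub_norm_le (1 : ℂ) (conj a * p)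
  have hap : ‖a‖ * ‖p‖ ≤ 1 := by nlinarith [norm_nonneg a, norm_nonneg p]
  have hsq : ‖p - a‖ ^ 2 ≤ s ^ 2 * ‖1 - conj a * p‖ ^ 2 := by
    rw [← mul_pow]; exact pow_le_pow_left₀ (norm_nonneg _) h 2
  have hpick : (1 - s ^ 2) * (1 - ‖a‖ * ‖p‖) ^ 2 ≤ (1 - ‖a‖ ^ 2) * (1 - ‖p‖ ^ 2) := by
    have := sq_norm_one_sub_conj_mul_sub_sq_norm_sub a p
    have := pow_le_pow_left₀ (by linarith) hden 2
    nlinarith [mul_le_mul_of_nonneg_left this (by nlinarith : (0 : ℝ) ≤ 1 - s ^ 2)]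
  -- `(1 - ‖a‖‖p‖)² - (1 - ‖a‖²)(1 - ‖p‖²) = (‖p‖ - ‖a‖)²`
  have : (‖p‖ - ‖a‖) ^ 2 ≤ (s * (1 - ‖a‖ * ‖p‖)) ^ 2 := by nlinarith
  nlinarith [abs_le_of_sq_le_sq' this (by nlinarith)]

lemma norm_sub_apply_zero_le_of_mapsTo_ball {φ : ℂ → ℂ} (hd : DifferentiableOn ℂ φ (ball 0 1))
    (hm : MapsTo φ (ball 0 1) (ball 0 1)) {z : ℂ} (hz : ‖z‖ < 1) :
    ‖φ z - φ 0‖ ≤ ‖z‖ * ‖1 - conj (φ 0) * φ z‖ := by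
  have h0 : ‖φ 0‖ < 1 := mem_ball_zero_iff.mp (hm (mem_ball_self one_pos))
  have hschwarz := Complex.norm_le_norm_of_mapsTo_ball
    ((differentiableOn_blaschkeFactor h0).comp hd hm)
    (((mapsTo_blaschkeFactor h0).comp hm).mono_right ball_subset_closedBall)
    (blaschkeFactor_self _) hz
  have hden := one_sub_conj_mul_ne_zero h0 (mem_ball_zero_iff.mp (hm (mem_ball_zero_iff.mpr hz))).le
  rwa [Function.comp_apply, blaschkeFactor, norm_div, div_le_iff₀ (norm_pos_iff.mpr hden)]
    at hschwarz

lemma norm_deriv_mul_le_of_mapsTo_ball {φ : ℂ → ℂ} (hd : DifferentiableOn ℂ φ (ball 0 1))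
    (hm : MapsTo φ (ball 0 1) (ball 0 1)) {z : ℂ} (hz : ‖z‖ < 1) :
    ‖deriv φ z‖ * (1 - ‖z‖ ^ 2) ≤ 1 - ‖φ z‖ ^ 2 := by
  set a := φ z
  have ha : ‖a‖ < 1 := mem_ball_zero_iff.mp (hm (mem_ball_zero_iff.mpr hz))
  have hz' : ‖-z‖ < 1 := by rwa [norm_neg]
  set G := blaschkeFactor a ∘ φ ∘ blaschkeFactor (-z)
  have hschwarz : ‖deriv G 0‖ ≤ 1 := by
    refine Complex.norm_deriv_le_one_of_mapsTo_ball
      (((differentiableOn_blaschkeFactor ha).comp hd hm).comp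
        (differentiableOn_blaschkeFactor hz') (mapsTo_blaschkeFactor hz')) ?_ one_pos
    have hG0 : G 0 = 0 := by simp [G, a]
    rw [hG0]
    exact (((mapsTo_blaschkeFactor ha).comp hm).comp (mapsTo_blaschkeFactor hz')).mono_right
      ball_subset_closedBall
  have hφ : HasDerivAt φ (deriv φ z) (blaschkeFactor (-z) 0) := by
    rw [blaschkeFactor_neg_zero]
    exact (hd.differentiableAt (isOpen_ball.mem_nhds (mem_ball_zero_iff.mpr hz))).hasDerivAt
  have hB : HasDerivAt (blaschkeFactor a) ((1 - conj a * a) / (1 - conj a * a) ^ 2)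
      (φ (blaschkeFactor (-z) 0)) := by
    rw [blaschkeFactor_neg_zero]; exact hasDerivAt_blaschkeFactor ha ha
  have hG := hB.comp 0 (hφ.comp 0 (hasDerivAt_blaschkeFactor hz' (by simp)))
  rw [hG.deriv] at hschwarz
  have ha2 : 0 < 1 - ‖a‖ ^ 2 := by nlinarith [norm_nonneg a]
  have hval : (1 - conj a * a) / (1 - conj a * a) ^ 2 *
      (deriv φ z * ((1 - conj (-z) * -z) / (1 - conj (-z) * 0) ^ 2))
      = deriv φ z * ((1 - ‖z‖ ^ 2 : ℝ) : ℂ) / ((1 - ‖a‖ ^ 2 : ℝ) : ℂ) := by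
    have : (1 : ℂ) - ‖a‖ ^ 2 ≠ 0 := by exact_mod_cast ha2.ne'
    simp only [conj_mul', map_neg, neg_mul_neg, mul_zero, sub_zero, one_pow, div_one]
    push_cast
    field_simp
  rw [hval, norm_div, norm_mul, Complex.norm_real, Complex.norm_real, Real.norm_of_nonneg ha2.le,
    Real.norm_of_nonneg (by nlinarith [norm_nonneg z]), div_le_one ha2] at hschwarz
  exact hschwarz

lemma mapsTo_ball_or_eqOn_const_of_mapsTo_closedBall {φ : ℂ → ℂ}
    (hd : DifferentiableOn ℂ φ (ball 0 1)) (hm : MapsTo φ (ball 0 1) (closedBall 0 1)) :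
    MapsTo φ (ball 0 1) (ball 0 1) ∨ ∃ c : ℂ, ‖c‖ = 1 ∧ EqOn φ (fun _ ↦ c) (ball 0 1) := by
  by_cases hlt : MapsTo φ (ball 0 1) (ball 0 1)
  · exact Or.inl hlt
  obtain ⟨w, hw, hw1⟩ := not_forall₂.mp hlt
  have hnorm : ‖φ w‖ = 1 :=
    le_antisymm (mem_closedBall_zero_iff.mp (hm hw)) (by simpa using hw1)
  refine Or.inr ⟨φ w, hnorm, Complex.eqOn_of_isPreconnected_of_isMaxOn_norm
    (convex_ball 0 1).isPreconnected isOpen_ball hd hw fun v hv ↦ ?_⟩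
  simpa [hnorm] using hm hv

lemma norm_mul_one_add_le_of_mapsTo_closedBall {φ : ℂ → ℂ}
    (hd : DifferentiableOn ℂ φ (ball 0 1)) (hm : MapsTo φ (ball 0 1) (closedBall 0 1))
    {z : ℂ} (hz : ‖z‖ < 1) :
    ‖φ z‖ * (1 + ‖φ 0‖ * ‖z‖) ≤ ‖φ 0‖ + ‖z‖ := by
  rcases mapsTo_ball_or_eqOn_const_of_mapsTo_closedBall hd hm with hm' | ⟨c, hc, heq⟩
  · exact norm_mul_one_add_le_of_norm_sub_le
      (mem_closedBall_zero_iff.mp (hm (mem_ball_self one_pos)))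
      (mem_closedBall_zero_iff.mp (hm (mem_ball_zero_iff.mpr hz)))
      (norm_nonneg z) hz.le (norm_sub_apply_zero_le_of_mapsTo_ball hd hm' hz)
  · rw [heq (mem_ball_zero_iff.mpr hz), heq (mem_ball_self one_pos), hc]
    linarith

lemma norm_deriv_mul_le_of_mapsTo_closedBall {φ : ℂ → ℂ}
    (hd : DifferentiableOn ℂ φ (ball 0 1)) (hm : MapsTo φ (ball 0 1) (closedBall 0 1))
    {z : ℂ} (hz : ‖z‖ < 1) :
    ‖deriv φ z‖ * (1 - ‖z‖ ^ 2) ≤ 1 - ‖φ z‖ ^ 2 := by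
  rcases mapsTo_ball_or_eqOn_const_of_mapsTo_closedBall hd hm with hm' | ⟨c, hc, heq⟩
  · exact norm_deriv_mul_le_of_mapsTo_ball hd hm' hz
  · have hmem := mem_ball_zero_iff.mpr hz
    rw [(Filter.eventuallyEq_of_mem (isOpen_ball.mem_nhds hmem) heq).deriv_eq, deriv_const,
      heq hmem, hc]
    simp

noncomputable def mcCartyBound (β r : ℝ) : ℝ :=
  2 * r * (β * r ^ 2 + 2 * r + β) / ((1 - r ^ 2) * (r ^ 2 + 2 * β * r + 1))

/- The middle term is `2r·g(t)/(1 - r²)` with `g(t) = (t(1 - r²) + r(1 - t²))/(1 - r²t²)`, which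
is increasing on `[0, 1]`; at `t = (β + r)/(1 + βr)` it equals `mcCartyBound β r`. -/
lemma div_le_mcCartyBound {r t β S D : ℝ} (hr0 : 0 ≤ r) (hr : r < 1) (ht0 : 0 ≤ t) (ht1 : t ≤ 1)
    (hβ : 0 ≤ β) (htβ : t * (1 + β * r) ≤ β + r) (hS : 0 ≤ S) (hD : 1 - r ^ 2 * t ^ 2 ≤ D)
    (hSle : S * (1 - r ^ 2) ≤ t * (1 - r ^ 2) + r * (1 - t ^ 2)) :
    2 * r * S / D ≤ mcCartyBound β r := by
  have hrt : r * t ≤ r := mul_le_of_le_one_right hr0 ht1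
  have hr2 : r ^ 2 < 1 := by nlinarith
  have h1 : 0 < 1 - r ^ 2 * t ^ 2 := by nlinarith [mul_self_le_mul_self (mul_nonneg hr0 ht0) hrt]
  refine (div_le_div_of_nonneg_left (by positivity) h1 hD).trans ?_
  rw [mcCartyBound, div_le_div_iff₀ h1 (mul_pos (by linarith : (0:ℝ) < 1 - r ^ 2)
    (by nlinarith [mul_nonneg hβ hr0] : (0:ℝ) < r ^ 2 + 2 * β * r + 1))]
  nlinarith [mul_nonneg (mul_nonneg (by linarith : (0:ℝ) ≤ 2 * r)
      (by nlinarith : (0:ℝ) ≤ r ^ 2 + 2 * β * r + 1)) (sub_nonneg.2 hSle),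
    mul_nonneg (mul_nonneg (by linarith : (0:ℝ) ≤ 2 * r) (by nlinarith : (0:ℝ) ≤ 1 - r * t))
      (mul_nonneg (by nlinarith : (0:ℝ) ≤ 1 - r ^ 2)
        (by linarith : (0:ℝ) ≤ β + r - t * (1 + β * r)))]

lemma two_mul_norm_mul_deriv_div_le_mcCartyBound {ψ : ℂ → ℂ}
    (hd : DifferentiableOn ℂ ψ (ball 0 1)) (hm : MapsTo ψ (ball 0 1) (ball 0 1)) (hψ0 : ψ 0 = 0)
    {z : ℂ} (hz : ‖z‖ < 1) :
    2 * ‖z‖ * ‖deriv ψ z‖ / ‖1 - ψ z ^ 2‖ ≤ mcCartyBound ‖deriv ψ 0‖ ‖z‖ := by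
  set φ := dslope ψ 0
  have hφd : DifferentiableOn ℂ φ (ball 0 1) :=
    (differentiableOn_dslope (ball_mem_nhds 0 one_pos)).mpr hd
  have hφm : MapsTo φ (ball 0 1) (closedBall 0 1) := fun w hw ↦ by
    simpa using Complex.norm_dslope_le_div_of_mapsTo_ball hd
      (by rw [hψ0]; exact hm.mono_right ball_subset_closedBall) hw
  have hψφ : ψ = fun w ↦ w * φ w := funext fun w ↦ by
    simpa [hψ0] using (sub_smul_dslope ψ 0 w).symm
  have hφ0 : φ 0 = deriv ψ 0 := dslope_same ψ 0
  have hderiv : deriv ψ z = φ z + z * deriv φ z := by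
    have hφz := (hφd.differentiableAt (isOpen_ball.mem_nhds (mem_ball_zero_iff.mpr hz))).hasDerivAt
    rw [hψφ, ((hasDerivAt_id' z).fun_mul hφz).deriv, one_mul]
  have hpick := norm_deriv_mul_le_of_mapsTo_closedBall hφd hφm hz
  have hr2 : 0 ≤ 1 - ‖z‖ ^ 2 := by nlinarith [norm_nonneg z]
  refine div_le_mcCartyBound (norm_nonneg z) hz (norm_nonneg (φ z))
    (mem_closedBall_zero_iff.mp (hφm (mem_ball_zero_iff.mpr hz))) (norm_nonneg _) ?_
    (norm_nonneg _) ?_ ?_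
  · simpa [hφ0, mul_comm] using norm_mul_one_add_le_of_mapsTo_closedBall hφd hφm hz
  · have := norm_sub_norm_le (1 : ℂ) (ψ z ^ 2)
    rw [hψφ] at this ⊢
    simp only [norm_one, norm_pow, norm_mul] at this
    linarith [mul_pow ‖z‖ ‖φ z‖ 2]
  · have htri : ‖deriv ψ z‖ ≤ ‖φ z‖ + ‖z‖ * ‖deriv φ z‖ := by
      simpa [hderiv, norm_mul] using norm_add_le (φ z) (z * deriv φ z)
    nlinarith [mul_le_mul_of_nonneg_right htri hr2, mul_le_mul_of_nonneg_left hpick (norm_nonneg z)]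

lemma add_one_ne_zero_of_re_pos {w : ℂ} (hw : 0 < w.re) : w + 1 ≠ 0 :=
  ne_zero_of_re_pos (by rw [add_re, one_re]; linarith)

lemma norm_sub_one_div_add_one_lt_one {w : ℂ} (hw : 0 < w.re) : ‖(w - 1) / (w + 1)‖ < 1 := by
  rw [norm_div, div_lt_one (norm_pos_iff.mpr (add_one_ne_zero_of_re_pos hw))]
  refine lt_of_pow_lt_pow_left₀ 2 (norm_nonneg _) ?_
  simp only [Complex.sq_norm, normSq_apply, sub_re, add_re, sub_im, add_im, one_re, one_im]
  nlinarith

lemma norm_mul_deriv_div_le_mcCartyBound {h : ℂ → ℂ} (hd : DifferentiableOn ℂ h (ball 0 1))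
    (hre : ∀ z ∈ ball (0 : ℂ) 1, 0 < (h z).re) (h0 : h 0 = 1) {z : ℂ} (hz : ‖z‖ < 1) :
    ‖z * deriv h z / h z‖ ≤ mcCartyBound (‖deriv h 0‖ / 2) ‖z‖ := by
  have hne : ∀ w ∈ ball (0 : ℂ) 1, h w + 1 ≠ 0 := fun w hw ↦ add_one_ne_zero_of_re_pos (hre w hw)
  set ψ := fun w ↦ (h w - 1) / (h w + 1)
  have hψd : DifferentiableOn ℂ ψ (ball 0 1) := (hd.sub_const 1).div (hd.add_const 1) hne
  have hψm : MapsTo ψ (ball 0 1) (ball 0 1) := fun w hw ↦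
    mem_ball_zero_iff.mpr (norm_sub_one_div_add_one_lt_one (hre w hw))
  have hderiv : ∀ w ∈ ball (0 : ℂ) 1, deriv ψ w = 2 * deriv h w / (h w + 1) ^ 2 := fun w hw ↦ by
    have hdh := (hd.differentiableAt (isOpen_ball.mem_nhds hw)).hasDerivAt
    rw [((hdh.sub_const 1).fun_div (hdh.add_const 1) (hne w hw)).deriv]
    ring
  have hmem := mem_ball_zero_iff.mpr hz
  have hhz := ne_zero_of_re_pos (hre z hmem)
  have hψ0 : deriv ψ 0 = deriv h 0 / 2 := by
    rw [hderiv 0 (mem_ball_self one_pos), h0]; ring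
  have hlog : z * deriv h z / h z = 2 * z * deriv ψ z / (1 - ψ z ^ 2) := by
    have hz1 := hne z hmem
    have hψsq : 1 - ψ z ^ 2 = 4 * h z / (h z + 1) ^ 2 := by
      simp only [ψ]; field_simp; ring
    rw [hderiv z hmem, hψsq]
    field_simp
    ring
  have := two_mul_norm_mul_deriv_div_le_mcCartyBound hψd hψm (by simp [ψ, h0]) hz
  rw [hψ0, norm_div, Complex.norm_two] at this
  rwa [hlog, norm_div, norm_mul, norm_mul, Complex.norm_two]

lemma one_add_ne_zero_of_norm_lt_one {z : ℂ} (hz : ‖z‖ < 1) : 1 + z ≠ 0 := by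
  rw [add_comm, ← sub_neg_eq_add, sub_ne_zero]
  rintro rfl
  simp at hz

lemma norm_one_sub_div_one_add_sub {z : ℂ} (hz : ‖z‖ < 1) :
    ‖(1 - z) / (1 + z) - ((1 + ‖z‖ ^ 2) / (1 - ‖z‖ ^ 2) : ℝ)‖ = 2 * ‖z‖ / (1 - ‖z‖ ^ 2) := by
  have hr : 0 < 1 - ‖z‖ ^ 2 := by nlinarith [norm_nonneg z]
  have hr' : (1 : ℂ) - ‖z‖ ^ 2 ≠ 0 := by exact_mod_cast hr.ne'
  have hz1 := one_add_ne_zero_of_norm_lt_one hz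
  have key : (1 - z) / (1 + z) - (((1 + ‖z‖ ^ 2) / (1 - ‖z‖ ^ 2) : ℝ) : ℂ)
      = -2 * z * conj (1 + z) / ((1 + z) * ((1 - ‖z‖ ^ 2 : ℝ) : ℂ)) := by
    push_cast
    rw [map_add, map_one, div_sub_div _ _ hz1 hr', ← mul_conj']
    congr 1
    ring
  rw [key, norm_div, norm_mul, norm_mul, norm_mul, Complex.norm_conj, Complex.norm_real,
    Real.norm_of_nonneg hr.le, norm_neg, Complex.norm_two]
  field_simp [norm_ne_zero_iff.mpr hz1]

lemma mul_deriv_div_eq_of_eventuallyEq {f h : ℂ → ℂ} {z : ℂ}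
    (hfh : f =ᶠ[𝓝 z] fun w ↦ w * h w / (1 + w) ^ 2) (hz0 : z ≠ 0) (hz1 : 1 + z ≠ 0)
    (hdh : DifferentiableAt ℂ h z) (hhz : h z ≠ 0) :
    z * deriv f z / f z = z * deriv h z / h z + (1 - z) / (1 + z) := by
  have hden : HasDerivAt (fun w : ℂ ↦ (1 + w) ^ 2) (2 * (1 + z)) z := by
    simpa using ((hasDerivAt_id' z).const_add 1).fun_pow 2
  have hquot := ((hasDerivAt_id' z).fun_mul hdh.hasDerivAt).fun_div hden (pow_ne_zero 2 hz1)
  rw [hfh.deriv_eq, hquot.deriv, hfh.eq_of_nhds]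
  field_simp
  ring

theorem disk_containment_G1_general (b : ℝ)
    (f h : ℂ → ℂ)
    (hh : ∀ z, h z = if z = 0 then 1 else (1 + z) ^ 2 * f z / z)
    (hhdiff : DifferentiableOn ℂ h (Metric.ball (0 : ℂ) 1))
    (hhre : ∀ z ∈ Metric.ball (0 : ℂ) 1, 0 < (h z).re)
    (hh1 : deriv h 0 = 2 * (1 + 2 * b)) :
    ∀ (z : ℂ) (r : ℝ), ‖z‖ = r → r < 1 → z ≠ 0 →
      ‖z * deriv f z / f z - ((1 + r ^ 2) / (1 - r ^ 2) : ℝ)‖ ≤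
        2 * ((1 + |1 + 2 * b|) * r ^ 3 + 2 * (1 + |1 + 2 * b|) * r ^ 2 +
          (1 + |1 + 2 * b|) * r) / ((1 - r ^ 2) * (r ^ 2 + 2 * |1 + 2 * b| * r + 1)) := by
  rintro z r rfl hz hz0
  have hmem := mem_ball_zero_iff.mpr hz
  have hz1 := one_add_ne_zero_of_norm_lt_one hz
  have hβ : ‖deriv h 0‖ / 2 = |1 + 2 * b| := by
    rw [hh1, norm_mul, Complex.norm_two, ← ofReal_ofNat, ← ofReal_one, ← ofReal_mul,
      ← ofReal_add, Complex.norm_real, Real.norm_eq_abs]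
    ring
  have hfh : f =ᶠ[𝓝 z] fun w ↦ w * h w / (1 + w) ^ 2 := by
    filter_upwards [isOpen_ne.mem_nhds hz0,
      (continuous_const_add 1).continuousAt.eventually_ne hz1] with w hw0 hw1
    rw [hh w, if_neg hw0]
    field_simp
  have hmc := norm_mul_deriv_div_le_mcCartyBound hhdiff hhre (by simp [hh]) hz
  rw [hβ] at hmc
  have hr : 0 < 1 - ‖z‖ ^ 2 := by nlinarith [norm_nonneg z]
  have hq : 0 < ‖z‖ ^ 2 + 2 * |1 + 2 * b| * ‖z‖ + 1 := by positivity
  calc _ = ‖z * deriv h z / h z + ((1 - z) / (1 + z) - ((1 + ‖z‖ ^ 2) / (1 - ‖z‖ ^ 2) : ℝ))‖ := by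
        rw [mul_deriv_div_eq_of_eventuallyEq hfh hz0 hz1 (hhdiff.differentiableAt
          (isOpen_ball.mem_nhds hmem)) (ne_zero_of_re_pos (hhre z hmem)), add_sub_assoc]
    _ ≤ mcCartyBound |1 + 2 * b| ‖z‖ + 2 * ‖z‖ / (1 - ‖z‖ ^ 2) :=
        (norm_add_le _ _).trans (add_le_add hmc (norm_one_sub_div_one_add_sub hz).le)
    _ = _ := by
        rw [mcCartyBound]
        field_simp
        ring

theorem disk_containment_G1 (b : ℝ) (hb : |1 + 2 * b| ≤ 1)
    (f h : ℂ → ℂ)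
    (hf : DifferentiableOn ℂ f (Metric.ball (0 : ℂ) 1))
    (hf0 : f 0 = 0) (hf1 : deriv f 0 = 1)
    (hfne : ∀ z ∈ Metric.ball (0 : ℂ) 1, z ≠ 0 → f z ≠ 0)
    (hh : ∀ z, h z = if z = 0 then 1 else (1 + z) ^ 2 * f z / z)
    (hhdiff : DifferentiableOn ℂ h (Metric.ball (0 : ℂ) 1))
    (hhre : ∀ z ∈ Metric.ball (0 : ℂ) 1, 0 < (h z).re)
    (hh1 : deriv h 0 = 2 * (1 + 2 * b)) :
    ∀ (z : ℂ) (r : ℝ), ‖z‖ = r → r < 1 → z ≠ 0 →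
      ‖z * deriv f z / f z - ((1 + r ^ 2) / (1 - r ^ 2) : ℝ)‖ ≤
        2 * ((1 + |1 + 2 * b|) * r ^ 3 + 2 * (1 + |1 + 2 * b|) * r ^ 2 +
          (1 + |1 + 2 * b|) * r) / ((1 - r ^ 2) * (r ^ 2 + 2 * |1 + 2 * b| * r + 1)) :=
  disk_containment_G1_general b f h hh hhdiff hhre hh1
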